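/- arXiv:2011.09734 — 2 statements merged into one kernel-verified Lean document; each statement's English description precedes it below -/
import Mathlib

section
/- Let p ≥ 1, let h ∈ ℝ^p, let S ⊆ {1,…,p} with s = |S|, let λ > 0 and c_min > 0, and let q be a real number with q ≥ 0 (playing the role of the quadratic form hᵀ S_{X̃X̃} h ≥ 0). If 2q + λ‖h_{S^c}‖₁ ≤ 3λ‖h_S‖₁ and q ≥ c_min ‖h_S‖₂², then ‖h‖₁ ≤ (6/c_min)·s·λ. (This is the deterministic core of the proof of Theorem 2: combining the Lasso basic inequality on the event that the empirical cross term is small with the restricted eigenvalue condition yields the ℓ₁ error bound ‖β̂_lasso − β_proj‖₁ ≤ (6/c_min) s λ.) -/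
/-!
Since `q ≥ c_min ‖h_S‖₂² ≥ 0`, the cone condition `2q + λ‖h_{Sᶜ}‖₁ ≤ 3λ‖h_S‖₁` gives both `‖h_{Sᶜ}‖₁ ≤ 3‖h_S‖₁` and
`2 c_min ‖h_S‖₂² ≤ 3λ‖h_S‖₁`. Cauchy–Schwarz `‖h_S‖₁² ≤ s‖h_S‖₂²` turns the latter into
`2 c_min ‖h_S‖₁ ≤ 3sλ`, and then `‖h‖₁ ≤ 4‖h_S‖₁ ≤ 6sλ/c_min`.
-/

open Finset

theorem sq_sum_abs_le_card_mul_sum_sq {ι : Type*} (S : Finset ι) (h : ι → ℝ) :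
    (∑ j ∈ S, |h j|) ^ 2 ≤ S.card * ∑ j ∈ S, h j ^ 2 := by
  simpa only [sq_abs] using sq_sum_le_card_mul_sum_sq (s := S) (f := fun j => |h j|)

theorem mul_le_mul_of_sq_le_of_mul_le {a s Q c l : ℝ} (ha : 0 ≤ a) (hs : 0 ≤ s) (hl : 0 ≤ l)
    (hc : 0 < c) (hsq : a ^ 2 ≤ s * Q) (hQ : c * Q ≤ l * a) : c * a ≤ s * l := by
  rcases ha.eq_or_lt with rfl | ha
  · simpa using mul_nonneg hs hl
  · have : c * a * a ≤ s * l * a := by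
      calc c * a * a = c * a ^ 2 := by ring
        _ ≤ c * (s * Q) := by gcongr
        _ = s * (c * Q) := by ring
        _ ≤ s * (l * a) := by gcongr
        _ = s * l * a := by ring
    exact le_of_mul_le_mul_right this ha

theorem stmt_6_general (p : ℕ) (h : Fin p → ℝ) (S : Finset (Fin p))
    (lam cmin q : ℝ) (hlam : 0 < lam) (hcmin : 0 < cmin)
    (h1 : 2 * q + lam * ∑ j ∈ Sᶜ, |h j| ≤ 3 * lam * ∑ j ∈ S, |h j|)
    (h2 : cmin * ∑ j ∈ S, (h j) ^ 2 ≤ q) :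
    ∑ j, |h j| ≤ (6 / cmin) * S.card * lam := by
  set A := ∑ j ∈ S, |h j|
  set B := ∑ j ∈ Sᶜ, |h j|
  have hA : 0 ≤ A := sum_nonneg fun j _ => abs_nonneg _
  have hB : 0 ≤ B := sum_nonneg fun j _ => abs_nonneg _
  have hq : 0 ≤ q := (mul_nonneg hcmin.le (sum_nonneg fun j _ => sq_nonneg _)).trans h2
  have hcone : B ≤ 3 * A := le_of_mul_le_mul_left (by linarith) hlam
  have hAbound : (2 * cmin) * A ≤ S.card * (3 * lam) :=
    mul_le_mul_of_sq_le_of_mul_le hA S.card.cast_nonneg (by positivity) (by positivity)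
      (sq_sum_abs_le_card_mul_sum_sq S h) (by nlinarith [mul_nonneg hlam.le hB])
  rw [← sum_add_sum_compl S, div_mul_eq_mul_div, div_mul_eq_mul_div, le_div_iff₀ hcmin]
  nlinarith

/-- the deterministic core of the Lasso ℓ₁-error bound (Theorem 2):
if `2q + λ‖h_{Sᶜ}‖₁ ≤ 3λ‖h_S‖₁` and `q ≥ c_min ‖h_S‖₂²` with `q ≥ 0`, then
`‖h‖₁ ≤ (6/c_min)·s·λ` where `s = |S|`. -/
theorem stmt_6 (p : ℕ) (hp : 1 ≤ p) (h : Fin p → ℝ) (S : Finset (Fin p))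
    (lam cmin q : ℝ) (hlam : 0 < lam) (hcmin : 0 < cmin) (hq : 0 ≤ q)
    (h1 : 2 * q + lam * ∑ j ∈ Sᶜ, |h j| ≤ 3 * lam * ∑ j ∈ S, |h j|)
    (h2 : cmin * ∑ j ∈ S, (h j) ^ 2 ≤ q) :
    ∑ j, |h j| ≤ (6 / cmin) * S.card * lam :=
  stmt_6_general p h S lam cmin q hlam hcmin h1 h2
end

section
/- Let (Ω, F, P) be a probability space, K ≥ 1, B : Ω → {1,…,K} measurable with p_k := P(B = k) > 0 for all k, and π ∈ (0,1). Let Y(1), Y(0) : Ω → ℝ be square-integrable and let X : Ω → ℝ^p have square-integrable coordinates. For each k let P_k = P(·|{B=k}), Σ_k the conditional covariance matrix of X under P_k, and c_k(a) the vector of conditional covariances Cov_{P_k}(X_i, Y(a)). Set Σ̃ = Σ_{k=1}^K p_k Σ_k and c̃(a) = Σ_{k=1}^K p_k c_k(a), assume Σ̃ is positive definite, define the projection coefficients β(a) = Σ̃⁻¹ c̃(a) and β* = (1−π)β(1) + πβ(0), and define the transformed outcomes r(a) = Y(a) − ⟨X, β*⟩. With ς²_V(π) = (1/π) Σ_k p_k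 Var_{P_k}(V(1)) + (1/(1−π)) Σ_k p_k Var_{P_k}(V(0)) and ς²_{HV} = Σ_k p_k ([E_{P_k} V(1) − E_P V(1)] − [E_{P_k} V(0) − E_P V(0)])², one has (ς²_r(π) + ς²_{Hr}) − (ς²_Y(π) + ς²_{HY}) = −(1/(π(1−π))) (β*)ᵀ Σ̃ β*, and this quantity is ≤ 0. (This is the variance-difference conclusion of Theorem 3: the stratum-common Lasso-adjusted estimator τ̂_lasso, whose asymptotic variance is ς²_r(π) + ς²_{Hr}, is asymptotically at least as efficient as the stratified difference-in-means estimator τ̂, whose asymptotic variance is ς²_Y(π) + ς²_{HY}.) -/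
open Matrix MeasureTheory ProbabilityTheory

/-!
Within one stratum, bilinearity of covariance gives
`Var(V − ⟨X, b⟩) = Var V − 2⟨b, c⟩ + bᵀ Σ b`, and averaging over strata with weights `p_k` gives
the same identity with `Σ̃` and `c̃(a)`. Subtracting `⟨X, b⟩` shifts the stratum means and the
overall mean of both arms by the same amount, so `ς²_H` does not change. Finally
`Σ̃ β* = (1 − π) c̃(1) + π c̃(0)`, so the cross terms `(2/π)⟨β*, c̃(1)⟩ + (2/(1−π))⟨β*, c̃(0)⟩`
equal `2 β*ᵀ Σ̃ β* / (π(1 − π))` and the change in `ς²` is `−β*ᵀ Σ̃ β* / (π(1 − π)) ≤ 0`.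
-/

/-- Variance of a real random variable under a measure `Q`:
`Var_Q(V) = E_Q[(V − E_Q V)²]`. -/
noncomputable def evar {Ω : Type*} [MeasurableSpace Ω] (Q : Measure Ω) (V : Ω → ℝ) : ℝ :=
  ∫ ω, (V ω - ∫ x, V x ∂Q) ^ 2 ∂Q

/-- Covariance of two real random variables under a measure `Q`:
`Cov_Q(V, W) = E_Q[(V − E_Q V)(W − E_Q W)]`. -/
noncomputable def ecov {Ω : Type*} [MeasurableSpace Ω] (Q : Measure Ω) (V W : Ω → ℝ) : ℝ :=
  ∫ ω, (V ω - ∫ x, V x ∂Q) * (W ω - ∫ x, W x ∂Q) ∂Q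

section Moments

variable {Ω ι : Type*} [MeasurableSpace Ω] [Fintype ι]

lemma MeasureTheory.MemLp.cond {E : Type*} [NormedAddCommGroup E] {μ : Measure Ω} {s : Set Ω}
    {p : ENNReal} {f : Ω → E} (hf : MemLp f p μ) (hs : μ s ≠ 0) : MemLp f p μ[|s] :=
  (hf.restrict s).smul_measure (ENNReal.inv_ne_top.2 hs)

lemma ecov_eq_covariance (Q : Measure Ω) (V W : Ω → ℝ) : ecov Q V W = cov[V, W; Q] := rfl

lemma evar_eq_variance {Q : Measure Ω} {V : Ω → ℝ} (hV : AEMeasurable V Q) :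
    evar Q V = Var[V; Q] :=
  (variance_eq_integral hV).symm

noncomputable def ecovVec (Q : Measure Ω) (X : Ω → ι → ℝ) (V : Ω → ℝ) : ι → ℝ :=
  fun i => ecov Q (fun ω => X ω i) V

noncomputable def ecovMatrix (Q : Measure Ω) (X : Ω → ι → ℝ) : Matrix ι ι ℝ :=
  Matrix.of fun i j => ecov Q (fun ω => X ω i) (fun ω => X ω j)

lemma memLp_dotProduct {Q : Measure Ω} {X : Ω → ι → ℝ}
    (hX : ∀ i, MemLp (fun ω => X ω i) 2 Q) (b : ι → ℝ) :
    MemLp (fun ω => X ω ⬝ᵥ b) 2 Q :=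
  memLp_finsetSum Finset.univ fun i _ => (hX i).mul_const (b i)

lemma evar_sub_dotProduct {Q : Measure Ω} [IsFiniteMeasure Q] {V : Ω → ℝ} (hV : MemLp V 2 Q)
    {X : Ω → ι → ℝ} (hX : ∀ i, MemLp (fun ω => X ω i) 2 Q) (b : ι → ℝ) :
    evar Q (fun ω => V ω - X ω ⬝ᵥ b) =
      evar Q V - 2 * (b ⬝ᵥ ecovVec Q X V) + b ⬝ᵥ (ecovMatrix Q X *ᵥ b) := by
  have hXb : ∀ i, MemLp (fun ω => X ω i * b i) 2 Q := fun i => (hX i).mul_const (b i)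
  have hcov : cov[V, fun ω => X ω ⬝ᵥ b; Q] = b ⬝ᵥ ecovVec Q X V := by
    rw [show (fun ω => X ω ⬝ᵥ b) = fun ω => ∑ i, X ω i * b i from rfl,
      covariance_fun_sum_right hXb hV]
    exact Finset.sum_congr rfl fun i _ => by
      rw [covariance_comm, covariance_mul_const_left, mul_comm]; rfl
  have hvar : Var[fun ω => X ω ⬝ᵥ b; Q] = b ⬝ᵥ (ecovMatrix Q X *ᵥ b) := by
    rw [show (fun ω => X ω ⬝ᵥ b) = fun ω => ∑ i, X ω i * b i from rfl,
      variance_fun_sum hXb]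
    simp only [covariance_mul_const_right, covariance_mul_const_left, dotProduct, mulVec,
      ecovMatrix, of_apply, ecov_eq_covariance, Finset.mul_sum]
    exact Finset.sum_congr rfl fun i _ => Finset.sum_congr rfl fun j _ => by ring
  rw [evar_eq_variance (V := fun ω => V ω - X ω ⬝ᵥ b)
      ((hV.sub (memLp_dotProduct hX b)).aemeasurable),
    evar_eq_variance hV.aemeasurable, variance_fun_sub hV (memLp_dotProduct hX b), hcov, hvar]

lemma sum_mul_evar_sub_dotProduct {κ : Type*} [Fintype κ] (w : κ → ℝ) (Q : κ → Measure Ω)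
    [∀ k, IsFiniteMeasure (Q k)] {V : Ω → ℝ} (hV : ∀ k, MemLp V 2 (Q k))
    {X : Ω → ι → ℝ} (hX : ∀ k i, MemLp (fun ω => X ω i) 2 (Q k)) (b : ι → ℝ) :
    ∑ k, w k * evar (Q k) (fun ω => V ω - X ω ⬝ᵥ b) =
      ∑ k, w k * evar (Q k) V - 2 * (b ⬝ᵥ ∑ k, w k • ecovVec (Q k) X V)
        + b ⬝ᵥ ((∑ k, w k • ecovMatrix (Q k) X) *ᵥ b) := by
  simp only [evar_sub_dotProduct (hV _) (hX _) b, sum_mulVec, dotProduct_sum, smul_mulVec,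
    dotProduct_smul, smul_eq_mul, Finset.mul_sum, mul_add, mul_sub, Finset.sum_add_distrib,
    Finset.sum_sub_distrib]
  congr 2
  exact Finset.sum_congr rfl fun k _ => by ring

lemma integral_sub_sub_integral_sub {μ : Measure Ω} {V₁ V₀ Z : Ω → ℝ} (h₁ : Integrable V₁ μ)
    (h₀ : Integrable V₀ μ) (hZ : Integrable Z μ) :
    ∫ ω, (V₁ ω - Z ω) ∂μ - ∫ ω, (V₀ ω - Z ω) ∂μ = ∫ ω, V₁ ω ∂μ - ∫ ω, V₀ ω ∂μ := by
  rw [integral_sub h₁ hZ, integral_sub h₀ hZ]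
  ring

end Moments

lemma mixture_quadratic_identity {n : Type*} [Fintype n] {S : Matrix n n ℝ} {c₁ c₀ β : n → ℝ}
    {π : ℝ} (hπ₀ : π ≠ 0) (hπ₁ : 1 - π ≠ 0) (hβ : S *ᵥ β = (1 - π) • c₁ + π • c₀) :
    (1 / π) * (-2 * (β ⬝ᵥ c₁) + β ⬝ᵥ (S *ᵥ β)) + (1 / (1 - π)) * (-2 * (β ⬝ᵥ c₀) + β ⬝ᵥ (S *ᵥ β))
      = -(1 / (π * (1 - π))) * (β ⬝ᵥ (S *ᵥ β)) := by
  have hq : β ⬝ᵥ (S *ᵥ β) = (1 - π) * (β ⬝ᵥ c₁) + π * (β ⬝ᵥ c₀) := by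
    rw [hβ, dotProduct_add, dotProduct_smul, dotProduct_smul, smul_eq_mul, smul_eq_mul]
  rw [hq]
  field_simp
  ring

theorem stmt_17_general {Ω : Type*} [MeasurableSpace Ω] (P : Measure Ω) [IsProbabilityMeasure P]
    (K p : ℕ)
    (B : Ω → Fin K)
    (hpk : ∀ k, 0 < (P {ω | B ω = k}).toReal)
    (π : ℝ) (hπ0 : 0 < π) (hπ1 : π < 1)
    (Y1 Y0 : Ω → ℝ) (hY1 : MemLp Y1 2 P) (hY0 : MemLp Y0 2 P)
    (X : Ω → Fin p → ℝ) (hX : ∀ i, MemLp (fun ω => X ω i) 2 P)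
    (hpos : (∑ k, (P {ω | B ω = k}).toReal •
      (Matrix.of fun i j => ecov (P[|{ω | B ω = k}]) (fun ω => X ω i) (fun ω => X ω j)) :
        Matrix (Fin p) (Fin p) ℝ).PosDef) :
    let pk : Fin K → ℝ := fun k => (P {ω | B ω = k}).toReal
    let Pc : Fin K → Measure Ω := fun k => P[|{ω | B ω = k}]
    let Sig : Fin K → Matrix (Fin p) (Fin p) ℝ :=
      fun k => Matrix.of fun i j => ecov (Pc k) (fun ω => X ω i) (fun ω => X ω j)
    let c1 : Fin K → Fin p → ℝ := fun k i => ecov (Pc k) (fun ω => X ω i) Y1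
    let c0 : Fin K → Fin p → ℝ := fun k i => ecov (Pc k) (fun ω => X ω i) Y0
    let Sigt : Matrix (Fin p) (Fin p) ℝ := ∑ k, pk k • Sig k
    let ct1 : Fin p → ℝ := ∑ k, pk k • c1 k
    let ct0 : Fin p → ℝ := ∑ k, pk k • c0 k
    let β1 : Fin p → ℝ := Sigt⁻¹ *ᵥ ct1
    let β0 : Fin p → ℝ := Sigt⁻¹ *ᵥ ct0
    let βstar : Fin p → ℝ := (1 - π) • β1 + π • β0
    let r1 : Ω → ℝ := fun ω => Y1 ω - X ω ⬝ᵥ βstar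
    let r0 : Ω → ℝ := fun ω => Y0 ω - X ω ⬝ᵥ βstar
    let sig2 : (Ω → ℝ) → (Ω → ℝ) → ℝ := fun V1 V0 =>
      (1 / π) * ∑ k, pk k * evar (Pc k) V1 +
        (1 / (1 - π)) * ∑ k, pk k * evar (Pc k) V0
    let sigH : (Ω → ℝ) → (Ω → ℝ) → ℝ := fun V1 V0 =>
      ∑ k, pk k * (((∫ x, V1 x ∂(Pc k)) - ∫ x, V1 x ∂P) -
        ((∫ x, V0 x ∂(Pc k)) - ∫ x, V0 x ∂P)) ^ 2
    (sig2 r1 r0 + sigH r1 r0) - (sig2 Y1 Y0 + sigH Y1 Y0) =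
        -(1 / (π * (1 - π))) * (βstar ⬝ᵥ (Sigt *ᵥ βstar)) ∧
      -(1 / (π * (1 - π))) * (βstar ⬝ᵥ (Sigt *ᵥ βstar)) ≤ 0 := by
  intro pk Pc Sig c1 c0 Sigt ct1 ct0 β1 β0 βstar r1 r0 sig2 sigH
  have hne : ∀ k, P {ω | B ω = k} ≠ 0 := fun k => (ENNReal.toReal_pos_iff.1 (hpk k)).1.ne'
  have : ∀ k, IsProbabilityMeasure (Pc k) := fun k => cond_isProbabilityMeasure (hne k)
  have hY1c : ∀ k, MemLp Y1 2 (Pc k) := fun k => hY1.cond (hne k)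
  have hY0c : ∀ k, MemLp Y0 2 (Pc k) := fun k => hY0.cond (hne k)
  have hXc : ∀ k i, MemLp (fun ω => X ω i) 2 (Pc k) := fun k i => (hX i).cond (hne k)
  have hr1 : ∑ k, pk k * evar (Pc k) r1 = ∑ k, pk k * evar (Pc k) Y1
      - 2 * (βstar ⬝ᵥ ct1) + βstar ⬝ᵥ (Sigt *ᵥ βstar) :=
    sum_mul_evar_sub_dotProduct pk Pc hY1c hXc βstar
  have hr0 : ∑ k, pk k * evar (Pc k) r0 = ∑ k, pk k * evar (Pc k) Y0
      - 2 * (βstar ⬝ᵥ ct0) + βstar ⬝ᵥ (Sigt *ᵥ βstar) :=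
    sum_mul_evar_sub_dotProduct pk Pc hY0c hXc βstar
  have hβ : Sigt *ᵥ βstar = (1 - π) • ct1 + π • ct0 := by
    have hdet : IsUnit Sigt.det := hpos.det_pos.ne'.isUnit
    simp only [βstar, β1, β0, mulVec_add, mulVec_smul, mulVec_mulVec,
      mul_nonsing_inv _ hdet, one_mulVec]
  have hH : sigH r1 r0 = sigH Y1 Y0 := by
    have hZ := memLp_dotProduct hX βstar
    refine Finset.sum_congr rfl fun k _ => ?_
    have hk := integral_sub_sub_integral_sub ((hY1c k).integrable one_le_two)
      ((hY0c k).integrable one_le_two) ((hZ.cond (hne k)).integrable one_le_two)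
    have hP := integral_sub_sub_integral_sub (hY1.integrable one_le_two)
      (hY0.integrable one_le_two) (hZ.integrable one_le_two)
    rw [sub_sub_sub_comm, sub_sub_sub_comm (∫ x, Y1 x ∂Pc k)]
    exact congrArg (fun t => pk k * t ^ 2) (congrArg₂ (· - ·) hk hP)
  have hident := mixture_quadratic_identity hπ0.ne' (sub_ne_zero.2 hπ1.ne') hβ
  refine ⟨by linear_combination (1 / π) * hr1 + (1 / (1 - π)) * hr0 + hH + hident, ?_⟩
  have hQ : 0 ≤ βstar ⬝ᵥ (Sigt *ᵥ βstar) := by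
    simpa only [star_trivial] using hpos.posSemidef.dotProduct_mulVec_nonneg βstar
  exact mul_nonpos_of_nonpos_of_nonneg
    (neg_nonpos.2 (one_div_nonneg.2 (mul_nonneg hπ0.le (sub_nonneg.2 hπ1.le)))) hQ

/-- the variance-difference conclusion of Theorem 3: adjusting by the
mixture `β* = (1−π)β(1) + πβ(0)` of the projection coefficients gives
`(ς²_r(π) + ς²_{Hr}) − (ς²_Y(π) + ς²_{HY}) = −(1/(π(1−π)))(β*)ᵀΣ̃β* ≤ 0`. -/
theorem stmt_17 {Ω : Type*} [MeasurableSpace Ω] (P : Measure Ω) [IsProbabilityMeasure P]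
    (K p : ℕ) (hK : 1 ≤ K) (hp : 1 ≤ p)
    (B : Ω → Fin K) (hB : Measurable B)
    (hpk : ∀ k, 0 < (P {ω | B ω = k}).toReal)
    (π : ℝ) (hπ0 : 0 < π) (hπ1 : π < 1)
    (Y1 Y0 : Ω → ℝ) (hY1 : MemLp Y1 2 P) (hY0 : MemLp Y0 2 P)
    (X : Ω → Fin p → ℝ) (hX : ∀ i, MemLp (fun ω => X ω i) 2 P)
    (hpos : (∑ k, (P {ω | B ω = k}).toReal •
      (Matrix.of fun i j => ecov (P[|{ω | B ω = k}]) (fun ω => X ω i) (fun ω => X ω j)) :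
        Matrix (Fin p) (Fin p) ℝ).PosDef) :
    let pk : Fin K → ℝ := fun k => (P {ω | B ω = k}).toReal
    let Pc : Fin K → Measure Ω := fun k => P[|{ω | B ω = k}]
    let Sig : Fin K → Matrix (Fin p) (Fin p) ℝ :=
      fun k => Matrix.of fun i j => ecov (Pc k) (fun ω => X ω i) (fun ω => X ω j)
    let c1 : Fin K → Fin p → ℝ := fun k i => ecov (Pc k) (fun ω => X ω i) Y1
    let c0 : Fin K → Fin p → ℝ := fun k i => ecov (Pc k) (fun ω => X ω i) Y0
    let Sigt : Matrix (Fin p) (Fin p) ℝ := ∑ k, pk k • Sig k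
    let ct1 : Fin p → ℝ := ∑ k, pk k • c1 k
    let ct0 : Fin p → ℝ := ∑ k, pk k • c0 k
    let β1 : Fin p → ℝ := Sigt⁻¹ *ᵥ ct1
    let β0 : Fin p → ℝ := Sigt⁻¹ *ᵥ ct0
    let βstar : Fin p → ℝ := (1 - π) • β1 + π • β0
    let r1 : Ω → ℝ := fun ω => Y1 ω - X ω ⬝ᵥ βstar
    let r0 : Ω → ℝ := fun ω => Y0 ω - X ω ⬝ᵥ βstar
    let sig2 : (Ω → ℝ) → (Ω → ℝ) → ℝ := fun V1 V0 =>
      (1 / π) * ∑ k, pk k * evar (Pc k) V1 +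
        (1 / (1 - π)) * ∑ k, pk k * evar (Pc k) V0
    let sigH : (Ω → ℝ) → (Ω → ℝ) → ℝ := fun V1 V0 =>
      ∑ k, pk k * (((∫ x, V1 x ∂(Pc k)) - ∫ x, V1 x ∂P) -
        ((∫ x, V0 x ∂(Pc k)) - ∫ x, V0 x ∂P)) ^ 2
    (sig2 r1 r0 + sigH r1 r0) - (sig2 Y1 Y0 + sigH Y1 Y0) =
        -(1 / (π * (1 - π))) * (βstar ⬝ᵥ (Sigt *ᵥ βstar)) ∧
      -(1 / (π * (1 - π))) * (βstar ⬝ᵥ (Sigt *ᵥ βstar)) ≤ 0 :=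
  stmt_17_general P K p B hpk π hπ0 hπ1 Y1 Y0 hY1 hY0 X hX hpos
end
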